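/- arXiv:1808.06514 — 8 statements merged into one kernel-verified Lean document; each statement's English description precedes it below -/
import Mathlib

section
/- Under the hypotheses of the previous coefficient system (equations (2.7)–(2.10) with |p₂| ≤ 2 and |q₂| ≤ 2), one has |a₂| ≤ 2α / √((λ+μ+2ξδ)² + α[2λ+μ − (λ+2ξδ)² + (12−4μ)ξδ]). -/
open Complex

theorem a2_bound_theorem21
    (a₂ p₂ q₂ : ℂ) (alpha lam mu del xi : ℝ)
    (halpha : 0 < alpha ∧ alpha ≤ 1) (hlam : 1 ≤ lam) (hmu : 0 ≤ mu) (hdel : 0 ≤ del)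
    (hxi : xi = (2 * lam + mu) / (2 * lam + 1))
    (hp₂ : ‖p₂‖ ≤ 2) (hq₂ : ‖q₂‖ ≤ 2)
    (heq : ((2 * (lam : ℂ) + mu) * (mu + 1) + 12 * xi * del
        - ((alpha : ℂ) - 1) / alpha * ((lam : ℂ) + mu + 2 * xi * del) ^ 2) * a₂ ^ 2
      = alpha * (p₂ + q₂))
    (hpos : 0 < (lam + mu + 2 * xi * del) ^ 2
        + alpha * (2 * lam + mu - (lam + 2 * xi * del) ^ 2 + (12 - 4 * mu) * xi * del)) :
    ‖a₂‖ ≤ 2 * alpha / Real.sqrt ((lam + mu + 2 * xi * del) ^ 2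
        + alpha * (2 * lam + mu - (lam + 2 * xi * del) ^ 2 + (12 - 4 * mu) * xi * del)) := by
  obtain ⟨ha0, ha1⟩ := halpha
  have haR : alpha ≠ 0 := ha0.ne'
  have hane : (alpha : ℂ) ≠ 0 := by exact_mod_cast haR
  set E : ℝ := (lam + mu + 2 * xi * del) ^ 2
        + alpha * (2 * lam + mu - (lam + 2 * xi * del) ^ 2 + (12 - 4 * mu) * xi * del) with hE
  have hC : ((2 * (lam : ℂ) + mu) * (mu + 1) + 12 * xi * del
        - ((alpha : ℂ) - 1) / alpha * ((lam : ℂ) + mu + 2 * xi * del) ^ 2)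
      = ((E / alpha : ℝ) : ℂ) := by
    rw [hE]; push_cast; field_simp; ring
  rw [hC] at heq
  have hnorm : (E / alpha) * ‖a₂‖ ^ 2 = alpha * ‖p₂ + q₂‖ := by
    have h := congrArg norm heq
    simpa [norm_mul, norm_pow, abs_of_pos hpos, abs_of_pos ha0, abs_div] using h
  have hsum : ‖p₂ + q₂‖ ≤ 4 := by
    calc ‖p₂ + q₂‖ ≤ ‖p₂‖ + ‖q₂‖ := norm_add_le _ _
    _ ≤ 4 := by linarith
  have hkey : E * ‖a₂‖ ^ 2 ≤ 4 * alpha ^ 2 := by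
    have : (E / alpha) * ‖a₂‖ ^ 2 ≤ alpha * 4 := by
      rw [hnorm]
      exact mul_le_mul_of_nonneg_left hsum ha0.le
    calc E * ‖a₂‖ ^ 2 = alpha * ((E / alpha) * ‖a₂‖ ^ 2) := by field_simp
    _ ≤ alpha * (alpha * 4) := mul_le_mul_of_nonneg_left this ha0.le
    _ = 4 * alpha ^ 2 := by ring
  have hsqE : Real.sqrt E > 0 := Real.sqrt_pos.mpr hpos
  have hsq : ‖a₂‖ ^ 2 ≤ (2 * alpha / Real.sqrt E) ^ 2 := by
    rw [div_pow, Real.sq_sqrt hpos.le]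
    rw [le_div_iff₀ hpos]
    nlinarith [hkey]
  have := Real.sqrt_le_sqrt hsq
  rwa [Real.sqrt_sq (norm_nonneg _), Real.sqrt_sq (by positivity)] at this
end

section
/- Suppose a₂, a₃, p₁, p₂, q₁, q₂ ∈ ℂ with |p₁|, |q₁|, |p₂|, |q₂| ≤ 2, α ∈ (0,1], λ ≥ 1, μ ≥ 0, δ ≥ 0, ξ = (2λ+μ)/(2λ+1), satisfy 2(λ+μ+2ξδ)² a₂² = α²(p₁²+q₁²) and a₃ = a₂² + α(p₂−q₂)/(2(2λ+μ+6ξδ)). Then |a₃| ≤ 4α²/(λ+μ+2ξδ)² + 2α/(2λ+μ+6ξδ). -/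
open Complex

theorem a3_bound_theorem21
    (a₂ a₃ p₁ p₂ q₁ q₂ : ℂ) (alpha lam mu del xi : ℝ)
    (halpha : 0 < alpha ∧ alpha ≤ 1) (hlam : 1 ≤ lam) (hmu : 0 ≤ mu) (hdel : 0 ≤ del)
    (hxi : xi = (2 * lam + mu) / (2 * lam + 1))
    (hp₁ : ‖p₁‖ ≤ 2) (hq₁ : ‖q₁‖ ≤ 2) (hp₂ : ‖p₂‖ ≤ 2) (hq₂ : ‖q₂‖ ≤ 2)
    (h1 : 2 * ((lam : ℂ) + mu + 2 * xi * del) ^ 2 * a₂ ^ 2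
          = (alpha : ℂ) ^ 2 * (p₁ ^ 2 + q₁ ^ 2))
    (h2 : a₃ = a₂ ^ 2 + (alpha : ℂ) * (p₂ - q₂) / (2 * (2 * (lam : ℂ) + mu + 6 * xi * del))) :
    ‖a₃‖ ≤ 4 * alpha ^ 2 / (lam + mu + 2 * xi * del) ^ 2
        + 2 * alpha / (2 * lam + mu + 6 * xi * del) := by
  obtain ⟨ha0, ha1⟩ := halpha
  have hxi0 : 0 ≤ xi := by
    rw [hxi]; positivity
  set A : ℝ := lam + mu + 2 * xi * del with hAdef
  set B : ℝ := 2 * lam + mu + 6 * xi * del with hBdef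
  have hA : (0:ℝ) < A := by
    have h : (0:ℝ) ≤ 2 * xi * del := by positivity
    simp only [hAdef]; nlinarith
  have hB : (0:ℝ) < B := by
    have h : (0:ℝ) ≤ 6 * xi * del := by positivity
    simp only [hBdef]; nlinarith
  have hAc : ((lam : ℂ) + mu + 2 * xi * del) = (A : ℂ) := by
    simp only [hAdef]; push_cast; ring
  have hBc : (2 * (lam : ℂ) + mu + 6 * xi * del) = (B : ℂ) := by
    simp only [hBdef]; push_cast; ring
  have h1' : (2 * (A:ℂ)^2) * a₂ ^ 2 = (alpha : ℂ) ^ 2 * (p₁ ^ 2 + q₁ ^ 2) := by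
    rw [← hAc]; linear_combination h1
  have h2n : ‖(2:ℂ)‖ = 2 := by norm_num
  have hnorm : 2 * A ^ 2 * ‖a₂ ^ 2‖ = alpha ^ 2 * ‖p₁ ^ 2 + q₁ ^ 2‖ := by
    have h := congrArg norm h1'
    simp only [norm_mul, norm_pow, Complex.norm_real, Real.norm_eq_abs,
      abs_of_pos hA, abs_of_pos ha0, h2n] at h
    rw [norm_pow]; linarith [h]
  have hpq1 : ‖p₁ ^ 2 + q₁ ^ 2‖ ≤ 8 := by
    calc ‖p₁ ^ 2 + q₁ ^ 2‖ ≤ ‖p₁ ^ 2‖ + ‖q₁ ^ 2‖ := norm_add_le _ _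
      _ ≤ 4 + 4 := by
          rw [norm_pow, norm_pow]
          gcongr <;> [nlinarith [norm_nonneg p₁]; nlinarith [norm_nonneg q₁]]
      _ = 8 := by norm_num
  have ha2 : ‖a₂ ^ 2‖ ≤ 4 * alpha ^ 2 / A ^ 2 := by
    rw [le_div_iff₀ (by positivity : (0:ℝ) < A ^ 2)]
    nlinarith [sq_nonneg alpha]
  have hsec : ‖(alpha : ℂ) * (p₂ - q₂) / (2 * (2 * (lam : ℂ) + mu + 6 * xi * del))‖
      ≤ 2 * alpha / B := by
    rw [hBc, norm_div, norm_mul, norm_mul]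
    simp only [Complex.norm_real, Real.norm_eq_abs, abs_of_pos ha0, abs_of_pos hB, h2n]
    have hpq : ‖p₂ - q₂‖ ≤ 4 := by
      calc ‖p₂ - q₂‖ ≤ ‖p₂‖ + ‖q₂‖ := norm_sub_le _ _
        _ ≤ 4 := by linarith
    rw [div_le_div_iff₀ (by positivity) hB]
    nlinarith [mul_le_mul_of_nonneg_left hpq (le_of_lt (mul_pos ha0 hB))]
  calc ‖a₃‖ ≤ ‖a₂ ^ 2‖ + ‖(alpha : ℂ) * (p₂ - q₂) / (2 * (2 * (lam : ℂ) + mu + 6 * xi * del))‖ := by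
        rw [h2]; exact norm_add_le _ _
    _ ≤ 4 * alpha ^ 2 / A ^ 2 + 2 * alpha / B := add_le_add ha2 hsec
end

section
/- Suppose complex numbers a₂, a₃, p₁, p₂, q₁, q₂ and reals β ∈ [0,1), λ ≥ 1, μ ≥ 0, δ ≥ 0, ξ = (2λ+μ)/(2λ+1) satisfy: (λ+μ+2ξδ)a₂ = (1−β)p₁, (2λ+μ)[((μ−1)/2)a₂² + (1+6δ/(2λ+1))a₃] = (1−β)p₂, −(λ+μ+2ξδ)a₂ = (1−β)q₁, (2λ+μ)[((μ+3)/2 + 12δ/(2λ+1))a₂² − (1+6δ/(2λ+1))a₃] = (1−β)q₂, and |p₁|, |q₁|, |p₂|, |q₂| ≤ 2. Then |a₂| ≤ min{√(4(1−β)/((2λ+μ)(1+μ+12δ/(2λ+1)))), 2(1−β)/(λ+μ+2ξδ)}. -/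
open Complex

theorem a2_bound_theorem31
    (a₂ a₃ p₁ p₂ q₁ q₂ : ℂ) (beta lam mu del xi : ℝ)
    (hbeta : 0 ≤ beta ∧ beta < 1) (hlam : 1 ≤ lam) (hmu : 0 ≤ mu) (hdel : 0 ≤ del)
    (hxi : xi = (2 * lam + mu) / (2 * lam + 1))
    (h1 : ((lam : ℂ) + mu + 2 * xi * del) * a₂ = (1 - (beta : ℂ)) * p₁)
    (h2 : (2 * (lam : ℂ) + mu) * (((mu : ℂ) - 1) / 2 * a₂ ^ 2
            + (1 + 6 * (del : ℂ) / (2 * lam + 1)) * a₃) = (1 - (beta : ℂ)) * p₂)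
    (h3 : -(((lam : ℂ) + mu + 2 * xi * del) * a₂) = (1 - (beta : ℂ)) * q₁)
    (h4 : (2 * (lam : ℂ) + mu) * ((((mu : ℂ) + 3) / 2 + 12 * (del : ℂ) / (2 * lam + 1)) * a₂ ^ 2
            - (1 + 6 * (del : ℂ) / (2 * lam + 1)) * a₃) = (1 - (beta : ℂ)) * q₂)
    (hp₁ : ‖p₁‖ ≤ 2) (hq₁ : ‖q₁‖ ≤ 2) (hp₂ : ‖p₂‖ ≤ 2) (hq₂ : ‖q₂‖ ≤ 2) :
    ‖a₂‖ ≤ min (Real.sqrt (4 * (1 - beta) / ((2 * lam + mu) * (1 + mu + 12 * del / (2 * lam + 1)))))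
        (2 * (1 - beta) / (lam + mu + 2 * xi * del)) := by
  obtain ⟨hb0, hb1⟩ := hbeta
  have hbpos : 0 < 1 - beta := by linarith
  have h2l1 : (0:ℝ) < 2 * lam + 1 := by linarith
  have h2lm : (0:ℝ) < 2 * lam + mu := by linarith
  have hxi0 : 0 ≤ xi := by
    rw [hxi]; positivity
  have hD : (0:ℝ) < lam + mu + 2 * xi * del := by
    have : 0 ≤ 2 * xi * del := by positivity
    linarith
  set C : ℝ := (2 * lam + mu) * (1 + mu + 12 * del / (2 * lam + 1)) with hC
  have hCpos : 0 < C := by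
    have : 0 ≤ 12 * del / (2 * lam + 1) := by positivity
    have h1m : (0:ℝ) < 1 + mu + 12 * del / (2 * lam + 1) := by linarith
    positivity
  have h2l1' : ((2 * lam + 1 : ℝ) : ℂ) ≠ 0 := by
    exact_mod_cast h2l1.ne'
  -- complex equation for a₂²
  have key : ((C : ℝ) : ℂ) * a₂ ^ 2 = (1 - (beta : ℂ)) * (p₂ + q₂) := by
    rw [hC]
    push_cast
    linear_combination h2 + h4
  have hnorm : C * ‖a₂‖ ^ 2 = (1 - beta) * ‖p₂ + q₂‖ := by
    have := congrArg norm key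
    rw [norm_mul, norm_mul, Complex.norm_real, norm_pow] at this
    rw [Real.norm_of_nonneg hCpos.le] at this
    have hb : ‖1 - (beta : ℂ)‖ = 1 - beta := by
      rw [show (1 - (beta : ℂ)) = ((1 - beta : ℝ) : ℂ) by push_cast; ring,
        Complex.norm_real, Real.norm_of_nonneg hbpos.le]
    rwa [hb] at this
  have hsum : ‖p₂ + q₂‖ ≤ 4 := by
    calc ‖p₂ + q₂‖ ≤ ‖p₂‖ + ‖q₂‖ := norm_add_le _ _
    _ ≤ 4 := by linarith
  have hsq : ‖a₂‖ ^ 2 ≤ 4 * (1 - beta) / C := by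
    rw [le_div_iff₀ hCpos]
    nlinarith [hnorm, hsum, hbpos]
  refine le_min ?_ ?_
  · exact (Real.le_sqrt (norm_nonneg _) (by positivity)).mpr hsq
  · -- second bound from h1
    have h1n : (lam + mu + 2 * xi * del) * ‖a₂‖ = (1 - beta) * ‖p₁‖ := by
      have := congrArg norm h1
      rw [norm_mul, norm_mul] at this
      have hl : ‖((lam : ℂ) + mu + 2 * xi * del)‖ = lam + mu + 2 * xi * del := by
        rw [show ((lam : ℂ) + mu + 2 * xi * del) = ((lam + mu + 2 * xi * del : ℝ) : ℂ) by
          push_cast; ring, Complex.norm_real, Real.norm_of_nonneg hD.le]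
      have hb : ‖1 - (beta : ℂ)‖ = 1 - beta := by
        rw [show (1 - (beta : ℂ)) = ((1 - beta : ℝ) : ℂ) by push_cast; ring,
          Complex.norm_real, Real.norm_of_nonneg hbpos.le]
      rwa [hl, hb] at this
    rw [le_div_iff₀ hD]
    nlinarith [h1n, hp₁, hbpos, norm_nonneg p₁]
end

section
/- Under the same coefficient system as above (with |p₁|,|q₁|,|p₂|,|q₂| ≤ 2), one has a₃ = (1−β)²(p₁²+q₁²)/(2(λ+μ+2ξδ)²) + (1−β)(p₂−q₂)/(2(2λ+μ+6ξδ)), and consequently |a₃| ≤ 4(1−β)²/(λ+μ+2ξδ)² + 2(1−β)/(2λ+μ+6ξδ). -/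
/-!
The first and third equations give `(λ + μ + 2ξδ)² a₂² = (1 - β)² p₁² = (1 - β)² q₁²`, which
expresses `a₂²` through `p₁² + q₁²`. In the second and fourth equations the coefficient of `a₂²` in the fourth
exceeds that in the second by twice the coefficient of `a₃`, so their difference is
`2 (2λ + μ + 6ξδ) (a₃ - a₂²) = (1 - β)(p₂ - q₂)`. The bound is then the triangle inequality.
-/

open Complex

section Field

variable {K : Type*} [Field K]

theorem mul_one_add_div_eq {lam mu del xi : K} (hlam : 2 * lam + 1 ≠ 0)
    (hxi : xi * (2 * lam + 1) = 2 * lam + mu) :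
    (2 * lam + mu) * (1 + 6 * del / (2 * lam + 1)) = 2 * lam + mu + 6 * xi * del := by
  field_simp
  linear_combination -6 * del * hxi

variable [CharZero K]

theorem sq_eq_of_mul_eq_of_neg_mul_eq {A c x p q : K} (hA : A ≠ 0)
    (hp : A * x = c * p) (hq : -(A * x) = c * q) :
    x ^ 2 = c ^ 2 * (p ^ 2 + q ^ 2) / (2 * A ^ 2) := by
  field_simp
  linear_combination (A * x + c * p) * hp + (c * q - A * x) * hq

theorem eq_add_div_of_mul_sub_eq {S T e c x y p q : K} (hST : S * T ≠ 0)
    (hp : S * (e * x + T * y) = c * p) (hq : S * ((e + 2 * T) * x - T * y) = c * q) :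
    y = x + c * (p - q) / (2 * (S * T)) := by
  rw [← sub_eq_iff_eq_add', eq_div_iff (mul_ne_zero two_ne_zero hST)]
  linear_combination hp - hq

end Field

theorem norm_coeff_bound {z₁ z₂ w₁ w₂ : ℂ} {c A B : ℝ} (hc : 0 ≤ c) (hA : A ≠ 0) (hB : 0 < B)
    (hz₁ : ‖z₁‖ ≤ 2) (hz₂ : ‖z₂‖ ≤ 2) (hw₁ : ‖w₁‖ ≤ 2) (hw₂ : ‖w₂‖ ≤ 2) :
    ‖(c : ℂ) ^ 2 * (z₁ ^ 2 + z₂ ^ 2) / (2 * (A : ℂ) ^ 2) + (c : ℂ) * (w₁ - w₂) / (2 * (B : ℂ))‖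
      ≤ 4 * c ^ 2 / A ^ 2 + 2 * c / B := by
  have hz : ‖z₁ ^ 2 + z₂ ^ 2‖ ≤ 8 := by
    calc ‖z₁ ^ 2 + z₂ ^ 2‖ ≤ ‖z₁‖ ^ 2 + ‖z₂‖ ^ 2 := by
          rw [← norm_pow, ← norm_pow]; exact norm_add_le _ _
      _ ≤ 2 ^ 2 + 2 ^ 2 := by gcongr
      _ = 8 := by norm_num
  have hw : ‖w₁ - w₂‖ ≤ 4 := by
    calc ‖w₁ - w₂‖ ≤ ‖w₁‖ + ‖w₂‖ := norm_sub_le _ _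
      _ ≤ 2 + 2 := by gcongr
      _ = 4 := by norm_num
  have hA2 : 0 < A ^ 2 := by positivity
  calc _ ≤ ‖(c : ℂ) ^ 2 * (z₁ ^ 2 + z₂ ^ 2) / (2 * (A : ℂ) ^ 2)‖
          + ‖(c : ℂ) * (w₁ - w₂) / (2 * (B : ℂ))‖ := norm_add_le _ _
    _ = c ^ 2 * ‖z₁ ^ 2 + z₂ ^ 2‖ / (2 * A ^ 2) + c * ‖w₁ - w₂‖ / (2 * B) := by
        simp only [norm_div, norm_mul, norm_pow, Complex.norm_real, Real.norm_eq_abs,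
          Complex.norm_ofNat, abs_of_nonneg hc, abs_of_pos hB, sq_abs]
    _ ≤ c ^ 2 * 8 / (2 * A ^ 2) + c * 4 / (2 * B) := by gcongr
    _ = 4 * c ^ 2 / A ^ 2 + 2 * c / B := by field_simp; ring

theorem a3_formula_and_bound_theorem31
    (a₂ a₃ p₁ p₂ q₁ q₂ : ℂ) (beta lam mu del xi : ℝ)
    (hbeta : 0 ≤ beta ∧ beta < 1) (hlam : 1 ≤ lam) (hmu : 0 ≤ mu) (hdel : 0 ≤ del)
    (hxi : xi = (2 * lam + mu) / (2 * lam + 1))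
    (h1 : ((lam : ℂ) + mu + 2 * xi * del) * a₂ = (1 - (beta : ℂ)) * p₁)
    (h2 : (2 * (lam : ℂ) + mu) * (((mu : ℂ) - 1) / 2 * a₂ ^ 2
            + (1 + 6 * (del : ℂ) / (2 * lam + 1)) * a₃) = (1 - (beta : ℂ)) * p₂)
    (h3 : -(((lam : ℂ) + mu + 2 * xi * del) * a₂) = (1 - (beta : ℂ)) * q₁)
    (h4 : (2 * (lam : ℂ) + mu) * ((((mu : ℂ) + 3) / 2 + 12 * (del : ℂ) / (2 * lam + 1)) * a₂ ^ 2
            - (1 + 6 * (del : ℂ) / (2 * lam + 1)) * a₃) = (1 - (beta : ℂ)) * q₂)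
    (hp₁ : ‖p₁‖ ≤ 2) (hq₁ : ‖q₁‖ ≤ 2) (hp₂ : ‖p₂‖ ≤ 2) (hq₂ : ‖q₂‖ ≤ 2) :
    a₃ = (1 - (beta : ℂ)) ^ 2 * (p₁ ^ 2 + q₁ ^ 2) / (2 * ((lam : ℂ) + mu + 2 * xi * del) ^ 2)
        + (1 - (beta : ℂ)) * (p₂ - q₂) / (2 * (2 * (lam : ℂ) + mu + 6 * xi * del)) ∧
    ‖a₃‖ ≤ 4 * (1 - beta) ^ 2 / (lam + mu + 2 * xi * del) ^ 2
        + 2 * (1 - beta) / (2 * lam + mu + 6 * xi * del) := by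
  have hlam₁ : (2 * lam + 1 : ℝ) ≠ 0 := by linarith
  have hxi' : xi * (2 * lam + 1) = 2 * lam + mu := by rw [hxi]; field_simp
  have hxi₀ : 0 ≤ xi * del := mul_nonneg (by rw [hxi]; apply div_nonneg <;> linarith) hdel
  have hA : (lam + mu + 2 * xi * del : ℝ) ≠ 0 := by linarith
  have hB : (0 : ℝ) < 2 * lam + mu + 6 * xi * del := by linarith
  have hST : (2 * (lam : ℂ) + mu) * (1 + 6 * (del : ℂ) / (2 * lam + 1))
      = 2 * lam + mu + 6 * xi * del :=
    mul_one_add_div_eq (by exact_mod_cast hlam₁)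
      (by exact_mod_cast congrArg ((↑) : ℝ → ℂ) hxi')
  have ha₂ := sq_eq_of_mul_eq_of_neg_mul_eq (by exact_mod_cast hA) h1 h3
  have hcoef : ((mu : ℂ) + 3) / 2 + 12 * del / (2 * lam + 1)
      = ((mu : ℂ) - 1) / 2 + 2 * (1 + 6 * del / (2 * lam + 1)) := by ring
  rw [hcoef] at h4
  have ha₃ := eq_add_div_of_mul_sub_eq (by rw [hST]; exact_mod_cast hB.ne') h2 h4
  rw [hST, ha₂] at ha₃
  refine ⟨ha₃, ?_⟩
  have hbound := norm_coeff_bound (c := 1 - beta) (by linarith [hbeta.2]) hA hB hp₁ hq₁ hp₂ hq₂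
  push_cast at hbound
  rwa [ha₃]
end

section
/- Under the same coefficient system with μ ≥ 1, one has a₃ = (1−β)/(2(2λ+μ+6ξδ)) · [((3+μ+24δ/(2λ+1))/(1+μ+12δ/(2λ+1))) p₂ + ((1−μ)/(1+μ+12δ/(2λ+1))) q₂], and consequently |a₃| ≤ 2(1−β)/(2λ+μ+6ξδ). -/
/-!
Eliminating `a₂²` from the two coefficient equations expresses `a₃` as a real combination
`u p₂ + v q₂`. For `μ ≥ 1` the weight `u` is nonnegative, `v` is nonpositive and `u - v = 2`,
so the triangle inequality with `‖p₂‖, ‖q₂‖ ≤ 2` gives the bound.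
-/

open Complex

theorem eq_of_mul_add_eq_of_mul_sub_eq {K : Type*} [Field K] {A c m n x y p q r : K}
    (h₁ : A * (m * x + c * y) = r * p) (h₂ : A * (n * x - c * y) = r * q)
    (hne : A * c * (m + n) ≠ 0) :
    y = r / (A * c * (m + n)) * (n * p - m * q) := by
  rw [div_mul_eq_mul_div, eq_div_iff hne]
  linear_combination n * h₁ - m * h₂

theorem norm_smul_add_smul_le_of_nonneg_of_nonpos {E : Type*} [SeminormedAddCommGroup E]
    [NormedSpace ℝ E] {u v M : ℝ} {p q : E} (hu : 0 ≤ u) (hv : v ≤ 0)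
    (hp : ‖p‖ ≤ M) (hq : ‖q‖ ≤ M) :
    ‖u • p + v • q‖ ≤ (u - v) * M :=
  calc ‖u • p + v • q‖ ≤ |u| * ‖p‖ + |v| * ‖q‖ := by
        simpa only [norm_smul, Real.norm_eq_abs] using norm_add_le (u • p) (v • q)
    _ ≤ u * M + -v * M := by
        rw [abs_of_nonneg hu, abs_of_nonpos hv]
        gcongr
        linarith
    _ = (u - v) * M := by ring

theorem norm_le_of_eq_div_mul_add_mul {a p q : ℂ} {r D u v : ℝ} (hr : 0 ≤ r) (hD : 0 < D)
    (hu : 0 ≤ u) (hv : v ≤ 0) (huv : u - v = 2) (hp : ‖p‖ ≤ 2) (hq : ‖q‖ ≤ 2)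
    (ha : a = r / (2 * D) * (u * p + v * q)) :
    ‖a‖ ≤ 2 * r / D :=
  calc ‖a‖ = r / (2 * D) * ‖u • p + v • q‖ := by
        rw [ha, norm_mul, Complex.real_smul, Complex.real_smul]
        norm_cast
        rw [Real.norm_of_nonneg (by positivity)]
    _ ≤ r / (2 * D) * ((u - v) * 2) := by
        gcongr
        exact norm_smul_add_smul_le_of_nonneg_of_nonpos hu hv hp hq
    _ = 2 * r / D := by
        rw [huv]
        field_simp

theorem a3_eq_of_coefficient_system {a₂ a₃ p₂ q₂ : ℂ} {beta lam mu del xi : ℝ}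
    (hlam : 0 ≤ lam) (hmu : 0 < mu) (hdel : 0 ≤ del)
    (hxi : xi = (2 * lam + mu) / (2 * lam + 1))
    (h2 : (2 * (lam : ℂ) + mu) * (((mu : ℂ) - 1) / 2 * a₂ ^ 2
            + (1 + 6 * (del : ℂ) / (2 * lam + 1)) * a₃) = (1 - (beta : ℂ)) * p₂)
    (h4 : (2 * (lam : ℂ) + mu) * ((((mu : ℂ) + 3) / 2 + 12 * (del : ℂ) / (2 * lam + 1)) * a₂ ^ 2
            - (1 + 6 * (del : ℂ) / (2 * lam + 1)) * a₃) = (1 - (beta : ℂ)) * q₂) :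
    a₃ = (1 - (beta : ℂ)) / (2 * (2 * (lam : ℂ) + mu + 6 * xi * del))
        * (((3 + (mu : ℂ) + 24 * (del : ℂ) / (2 * lam + 1))
              / (1 + (mu : ℂ) + 12 * (del : ℂ) / (2 * lam + 1))) * p₂
          + ((1 - (mu : ℂ)) / (1 + (mu : ℂ) + 12 * (del : ℂ) / (2 * lam + 1))) * q₂) := by
  have hsum : ((mu : ℂ) - 1) / 2 + ((mu + 3) / 2 + 12 * (del : ℂ) / (2 * lam + 1))
      = 1 + (mu : ℂ) + 12 * (del : ℂ) / (2 * lam + 1) := by ring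
  have hAc : 2 * (lam : ℂ) + mu + 6 * xi * del
      = (2 * (lam : ℂ) + mu) * (1 + 6 * (del : ℂ) / (2 * lam + 1)) := by
    rw [hxi]; push_cast; ring
  have hs : 1 + (mu : ℂ) + 12 * (del : ℂ) / (2 * lam + 1) ≠ 0 := by
    exact_mod_cast (by positivity : (0 : ℝ) < 1 + mu + 12 * del / (2 * lam + 1)).ne'
  have hne : (2 * (lam : ℂ) + mu) * (1 + 6 * (del : ℂ) / (2 * lam + 1))
      * ((mu - 1) / 2 + ((mu + 3) / 2 + 12 * (del : ℂ) / (2 * lam + 1))) ≠ 0 := by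
    rw [hsum]
    exact_mod_cast (by positivity : (0 : ℝ) < (2 * lam + mu) * (1 + 6 * del / (2 * lam + 1))
      * (1 + mu + 12 * del / (2 * lam + 1))).ne'
  rw [eq_of_mul_add_eq_of_mul_sub_eq h2 h4 hne, hsum, ← hAc]
  field_simp
  ring

theorem a3_formula_and_bound_mu_ge_one
    (a₂ a₃ p₂ q₂ : ℂ) (beta lam mu del xi : ℝ)
    (hbeta : 0 ≤ beta ∧ beta < 1) (hlam : 1 ≤ lam) (hmu : 1 ≤ mu) (hdel : 0 ≤ del)
    (hxi : xi = (2 * lam + mu) / (2 * lam + 1))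
    (h2 : (2 * (lam : ℂ) + mu) * (((mu : ℂ) - 1) / 2 * a₂ ^ 2
            + (1 + 6 * (del : ℂ) / (2 * lam + 1)) * a₃) = (1 - (beta : ℂ)) * p₂)
    (h4 : (2 * (lam : ℂ) + mu) * ((((mu : ℂ) + 3) / 2 + 12 * (del : ℂ) / (2 * lam + 1)) * a₂ ^ 2
            - (1 + 6 * (del : ℂ) / (2 * lam + 1)) * a₃) = (1 - (beta : ℂ)) * q₂)
    (hp₂ : ‖p₂‖ ≤ 2) (hq₂ : ‖q₂‖ ≤ 2) :
    a₃ = (1 - (beta : ℂ)) / (2 * (2 * (lam : ℂ) + mu + 6 * xi * del))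
        * (((3 + (mu : ℂ) + 24 * (del : ℂ) / (2 * lam + 1))
              / (1 + (mu : ℂ) + 12 * (del : ℂ) / (2 * lam + 1))) * p₂
          + ((1 - (mu : ℂ)) / (1 + (mu : ℂ) + 12 * (del : ℂ) / (2 * lam + 1))) * q₂) ∧
    ‖a₃‖ ≤ 2 * (1 - beta) / (2 * lam + mu + 6 * xi * del) := by
  have ha₃ := a3_eq_of_coefficient_system (by linarith) (by linarith) hdel hxi h2 h4
  refine ⟨ha₃, ?_⟩
  have hs : 0 < 1 + mu + 12 * del / (2 * lam + 1) := by positivity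
  have hD : 0 < 2 * lam + mu + 6 * xi * del := by rw [hxi]; positivity
  have hu : 0 ≤ (3 + mu + 24 * del / (2 * lam + 1)) / (1 + mu + 12 * del / (2 * lam + 1)) := by
    positivity
  have hv : (1 - mu) / (1 + mu + 12 * del / (2 * lam + 1)) ≤ 0 :=
    div_nonpos_of_nonpos_of_nonneg (by linarith) hs.le
  have huv : (3 + mu + 24 * del / (2 * lam + 1)) / (1 + mu + 12 * del / (2 * lam + 1))
      - (1 - mu) / (1 + mu + 12 * del / (2 * lam + 1)) = 2 := by
    field_simp
    ring
  exact norm_le_of_eq_div_mul_add_mul (by linarith) hD hu hv huv hp₂ hq₂ (by exact_mod_cast ha₃)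
end

section
/- Let f(z) = z + a₂z² + a₃z³ + ⋯ be analytic and univalent on the unit disk with inverse extending analytically to the unit disk as g, and suppose both Re(f'(z)) > β for all z ∈ 𝕌 and Re(g'(w)) > β for all w ∈ 𝕌, where 1/3 ≤ β < 1. Then |a₂| ≤ 1 − β. -/
open Metric Complex

/-! If `Re f' > β` on the disk then `w ↦ (w - 1) / (w - (2β - 1))` maps the values of `f'` into
the unit disk, because `Re w > β` says exactly that `w` is closer to `1` than to its mirror image
`2β - 1` in the line `Re w = β`. Since `f'(0) = 1`, the Schwarz lemma applied to this composite
bounds its derivative `f''(0) / (2 - 2β)` by `1`, i.e. `|a₂| = |f''(0)| / 2 ≤ 1 - β`. -/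

theorem Complex.norm_sub_lt_norm_sub_of_midpoint_lt_re {a b : ℝ} {w : ℂ} (hab : a < b)
    (hw : (a + b) / 2 < w.re) : ‖w - b‖ < ‖w - a‖ := by
  have hsq : ‖w - b‖ ^ 2 < ‖w - a‖ ^ 2 := by
    simp only [Complex.sq_norm, normSq_apply, sub_re, sub_im, ofReal_re, ofReal_im]
    nlinarith
  exact lt_of_pow_lt_pow_left₀ 2 (norm_nonneg _) hsq

theorem Complex.norm_deriv_le_of_re_gt {h : ℂ → ℂ} {c : ℂ} {R β : ℝ}
    (hd : DifferentiableOn ℂ h (ball c R)) (hR : 0 < R) (hβ : β < 1) (hc : h c = 1)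
    (hre : ∀ z ∈ ball c R, β < (h z).re) : ‖deriv h c‖ ≤ 2 * (1 - β) / R := by
  set m : ℂ := ((2 * β - 1 : ℝ) : ℂ)
  have hcloser : ∀ z ∈ ball c R, ‖h z - 1‖ < ‖h z - m‖ := fun z hz => by
    simpa using norm_sub_lt_norm_sub_of_midpoint_lt_re (b := 1) (by linarith)
      (by linarith [hre z hz])
  have hne : ∀ z ∈ ball c R, h z - m ≠ 0 := fun z hz =>
    norm_pos_iff.1 ((norm_nonneg _).trans_lt (hcloser z hz))
  set φ : ℂ → ℂ := fun z => (h z - 1) / (h z - m)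
  have hφd : DifferentiableOn ℂ φ (ball c R) :=
    (hd.sub_const 1).div (hd.sub_const m) hne
  have hmaps : Set.MapsTo φ (ball c R) (closedBall (φ c) 1) := fun z hz => by
    simp only [φ, hc, sub_self, zero_div, mem_closedBall, dist_zero_right, norm_div]
    exact (div_lt_one ((norm_nonneg _).trans_lt (hcloser z hz))).2 (hcloser z hz) |>.le
  have hmc : (1 : ℂ) - m = ((2 * (1 - β) : ℝ) : ℂ) := by push_cast [m]; ring
  have hderφ : deriv φ c = deriv h c / (2 * (1 - β) : ℝ) := by
    have hdc : DifferentiableAt ℂ h c := hd.differentiableAt (ball_mem_nhds c hR)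
    have hm1 : (1 : ℂ) - m ≠ 0 := by rw [← hc]; exact hne c (mem_ball_self hR)
    have hφ' : HasDerivAt φ _ c :=
      (hdc.hasDerivAt.sub_const 1).div (hdc.hasDerivAt.sub_const m) (by rwa [hc])
    rw [hφ'.deriv, hc, ← hmc]
    field_simp
    ring
  have hschwarz := norm_deriv_le_div_of_mapsTo_ball hφd hmaps hR
  rw [hderφ, norm_div, norm_real, Real.norm_of_nonneg (by linarith),
    div_le_div_iff₀ (by linarith) hR] at hschwarz
  rw [le_div_iff₀ hR]
  linarith

theorem a2_bound_re_deriv_large_beta_general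
    (f : ℂ → ℂ)
    (hf : AnalyticOnNhd ℂ f (ball (0 : ℂ) 1))
    (hf1 : deriv f 0 = 1)
    (beta : ℝ) (hbeta : 1/3 ≤ beta ∧ beta < 1)
    (hfre : ∀ z ∈ ball (0 : ℂ) 1, beta < (deriv f z).re)
    (a₂ : ℂ) (ha₂ : a₂ = iteratedDeriv 2 f 0 / 2) :
    ‖a₂‖ ≤ 1 - beta := by
  have hf'' : ‖deriv (deriv f) 0‖ ≤ 2 * (1 - beta) / 1 :=
    norm_deriv_le_of_re_gt hf.deriv.differentiableOn one_pos hbeta.2 hf1 hfre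
  rw [ha₂, iteratedDeriv_succ, iteratedDeriv_one, norm_div, RCLike.norm_ofNat]
  linarith

/-- If `f` is bi-univalent with inverse extension `g`, `Re f' > β` and `Re g' > β` on
the unit disk with `1/3 ≤ β < 1`, then `|a₂| ≤ 1 - β`. -/
theorem a2_bound_re_deriv_large_beta
    (f g : ℂ → ℂ)
    (hf : AnalyticOnNhd ℂ f (ball (0 : ℂ) 1)) (hfinj : Set.InjOn f (ball (0 : ℂ) 1))
    (hf0 : f 0 = 0) (hf1 : deriv f 0 = 1)
    (hg : AnalyticOnNhd ℂ g (ball (0 : ℂ) 1)) (hginj : Set.InjOn g (ball (0 : ℂ) 1))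
    (hgf : ∀ᶠ z in nhds (0 : ℂ), g (f z) = z)
    (beta : ℝ) (hbeta : 1/3 ≤ beta ∧ beta < 1)
    (hfre : ∀ z ∈ ball (0 : ℂ) 1, beta < (deriv f z).re)
    (hgre : ∀ w ∈ ball (0 : ℂ) 1, beta < (deriv g w).re)
    (a₂ : ℂ) (ha₂ : a₂ = iteratedDeriv 2 f 0 / 2) :
    ‖a₂‖ ≤ 1 - beta :=
  a2_bound_re_deriv_large_beta_general f hf hf1 beta hbeta hfre a₂ ha₂
end

section
/- Let f(z) = z + a₂z² + a₃z³ + ⋯ be bi-univalent on the unit disk with inverse extension g, and suppose Re(f'(z)) > β and Re(g'(w)) > β on 𝕌 for some β with 0 ≤ β < 1/3. Then |a₂| ≤ √(2(1−β)/3) and |a₃| ≤ 2(1−β)/3. -/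
/-!
Carathéodory's lemma `‖p⁽ⁿ⁾(c)‖ rⁿ ≤ 2 n! Re p(c)` for `p` with nonnegative real part on a disc
comes from circle averages: on `|z - c| = r` the function `(z - c)⁻ⁿ conj p` is a multiple of the
conjugate of the holomorphic `(z - c)ⁿ p`, so its average vanishes for `n ≥ 1`. Hence
`p⁽ⁿ⁾(c) / n!`, the average of `(z - c)⁻ⁿ p`, is also the average of `(z - c)⁻ⁿ · 2 Re p`, whose
norm is at most `2 r⁻ⁿ` times the average of `Re p`, that is `2 r⁻ⁿ Re p(c)`.

Applied to `f' - β` and `g' - β` this gives `‖f'''(0)‖, ‖g'''(0)‖ ≤ 4 (1 - β)`. Differentiating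
`g ∘ f = id` three times gives `g'''(0) = 3 f''(0)² - f'''(0)`, so `‖a₃‖ = ‖f'''(0)‖ / 6` and
`12 ‖a₂‖² = ‖f'''(0) + g'''(0)‖` are bounded as claimed.
-/

open Metric Complex Real Set Filter Topology ComplexConjugate
open scoped Nat

section LocalInverse

variable {𝕜 : Type*} [NontriviallyNormedField 𝕜] {f g : 𝕜 → 𝕜} {x : 𝕜}

theorem deriv_eq_one_of_comp_eventuallyEq_id (hg : DifferentiableAt 𝕜 g (f x))
    (hf : DifferentiableAt 𝕜 f x) (hgf : g ∘ f =ᶠ[𝓝 x] id) (hf1 : deriv f x = 1) :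
    deriv g (f x) = 1 := by
  have h := deriv_comp x hg hf
  rwa [hgf.deriv_eq, deriv_id, hf1, mul_one, eq_comm] at h

theorem iteratedDeriv_two_of_comp_eventuallyEq_id (hg : ContDiffAt 𝕜 2 g (f x))
    (hf : ContDiffAt 𝕜 2 f x) (hgf : g ∘ f =ᶠ[𝓝 x] id) (hf1 : deriv f x = 1) :
    iteratedDeriv 2 g (f x) = -iteratedDeriv 2 f x := by
  have h := iteratedDeriv_comp_two hg hf
  rw [(hgf.iteratedDeriv 2).eq_of_nhds, iteratedDeriv_id, hf1,
    deriv_eq_one_of_comp_eventuallyEq_id (hg.differentiableAt two_ne_zero)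
      (hf.differentiableAt two_ne_zero) hgf hf1] at h
  simp only [OfNat.ofNat_ne_zero, OfNat.ofNat_ne_one, ↓reduceIte] at h
  linear_combination -h

theorem iteratedDeriv_three_of_comp_eventuallyEq_id (hg : ContDiffAt 𝕜 3 g (f x))
    (hf : ContDiffAt 𝕜 3 f x) (hgf : g ∘ f =ᶠ[𝓝 x] id) (hf1 : deriv f x = 1) :
    iteratedDeriv 3 g (f x) = 3 * iteratedDeriv 2 f x ^ 2 - iteratedDeriv 3 f x := by
  have h := iteratedDeriv_comp_three hg hf
  rw [(hgf.iteratedDeriv 3).eq_of_nhds, iteratedDeriv_id, hf1,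
    deriv_eq_one_of_comp_eventuallyEq_id (hg.differentiableAt three_ne_zero)
      (hf.differentiableAt three_ne_zero) hgf hf1,
    iteratedDeriv_two_of_comp_eventuallyEq_id (hg.of_le (by norm_num)) (hf.of_le (by norm_num))
      hgf hf1] at h
  simp only [OfNat.ofNat_ne_zero, OfNat.ofNat_ne_one, ↓reduceIte] at h
  linear_combination -h

end LocalInverse

theorem norm_circleAverage_le {E : Type*} [NormedAddCommGroup E] [NormedSpace ℝ E] {f : ℂ → E}
    {c : ℂ} {R : ℝ} : ‖circleAverage f c R‖ ≤ circleAverage (fun z ↦ ‖f z‖) c R := by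
  rw [circleAverage, circleAverage, norm_smul, Real.norm_of_nonneg (by positivity), smul_eq_mul]
  gcongr
  exact intervalIntegral.norm_integral_le_integral_norm two_pi_pos.le

section Caratheodory

variable {p : ℂ → ℂ} {c : ℂ} {R : ℝ}

theorem circleAverage_inv_pow_mul_eq_iteratedDeriv (hR : 0 < R)
    (hp : DiffContOnCl ℂ p (ball c R)) (n : ℕ) :
    circleAverage (fun z ↦ (z - c)⁻¹ ^ n * p z) c R = iteratedDeriv n p c / n ! := by
  have hintegrand : (fun z ↦ (z - c)⁻¹ • ((z - c)⁻¹ ^ n * p z)) =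
      fun z ↦ (1 / (z - c) ^ (n + 1)) • p z := by
    ext z
    rw [smul_eq_mul, smul_eq_mul, one_div, pow_succ', mul_inv, inv_pow, mul_assoc]
  rw [circleAverage_eq_circleIntegral hR.ne', hintegrand,
    hp.circleIntegral_one_div_sub_center_pow_smul hR n, smul_smul, smul_eq_mul]
  field_simp

theorem circleAverage_pow_mul_eq_zero (hR : 0 < R) (hp : DiffContOnCl ℂ p (ball c R)) {n : ℕ}
    (hn : n ≠ 0) : circleAverage (fun z ↦ (z - c) ^ n * p z) c R = 0 := by
  have hq : DiffContOnCl ℂ (fun z ↦ (z - c) ^ n * p z) (ball c |R|) := by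
    rw [abs_of_pos hR]
    exact ((differentiable_id.sub_const c).pow n).diffContOnCl.smul hp
  rw [hq.circleAverage, sub_self, zero_pow hn, zero_mul]

theorem circleAverage_inv_pow_mul_conj_eq_zero (hR : 0 < R) (hp : DiffContOnCl ℂ p (ball c R))
    {n : ℕ} (hn : n ≠ 0) : circleAverage (fun z ↦ (z - c)⁻¹ ^ n * conj (p z)) c R = 0 := by
  have hsphere : EqOn (fun z ↦ (z - c)⁻¹ ^ n * conj (p z))
      (fun z ↦ (R ^ (2 * n))⁻¹ • conj ((z - c) ^ n * p z)) (sphere c |R|) := by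
    intro z hz
    have hw : z - c ≠ 0 := sub_ne_zero.2 (ne_of_mem_sphere hz (by positivity))
    have hconj : conj (z - c) = (R : ℂ) ^ 2 * (z - c)⁻¹ := by
      rw [eq_mul_inv_iff_mul_eq₀ hw, mul_comm, mul_conj, normSq_eq_norm_sq,
        mem_sphere_iff_norm.1 hz, sq_abs]
      push_cast
      rfl
    have hR' : (R : ℂ) ≠ 0 := ofReal_ne_zero.2 hR.ne'
    simp only [map_mul, map_pow, hconj, real_smul]
    push_cast
    field_simp
    ring
  have hint : CircleIntegrable (fun z ↦ (z - c) ^ n * p z) c R :=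
    (((continuousOn_id.sub continuousOn_const).pow n).fun_mul
      (hp.continuousOn_ball.mono sphere_subset_closedBall)).circleIntegrable hR.le
  have hconj := (conjCLE : ℂ →L[ℝ] ℂ).circleAverage_comp_comm hint
  simp only [Function.comp_def, ContinuousLinearEquiv.coe_coe, conjCLE_apply,
    circleAverage_pow_mul_eq_zero hR hp hn, map_zero] at hconj
  rw [circleAverage_congr_sphere hsphere, circleAverage_fun_smul, hconj, smul_zero]

theorem re_eq_circleAverage_re (hR : 0 < R) (hp : DiffContOnCl ℂ p (ball c R)) :
    (p c).re = circleAverage (fun z ↦ (p z).re) c R := by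
  have hp' : DiffContOnCl ℂ p (ball c |R|) := by rwa [abs_of_pos hR]
  have hint : CircleIntegrable p c R :=
    hp.continuousOn_ball.mono sphere_subset_closedBall |>.circleIntegrable hR.le
  have h := reCLM.circleAverage_comp_comm hint
  simp only [Function.comp_def, reCLM_apply, hp'.circleAverage] at h
  exact h.symm

theorem norm_iteratedDeriv_mul_pow_le_of_re_nonneg_on_sphere (hR : 0 < R)
    (hp : DiffContOnCl ℂ p (ball c R)) (hre : ∀ z ∈ sphere c R, 0 ≤ (p z).re) {n : ℕ}
    (hn : n ≠ 0) : ‖iteratedDeriv n p c‖ * R ^ n ≤ 2 * n ! * (p c).re := by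
  have hcont : ContinuousOn p (sphere c R) := hp.continuousOn_ball.mono sphere_subset_closedBall
  have hinv : ContinuousOn (fun z ↦ (z - c)⁻¹ ^ n) (sphere c R) :=
    ((continuousOn_id.sub continuousOn_const).inv₀
      fun z hz ↦ sub_ne_zero.2 (ne_of_mem_sphere hz hR.ne')).pow n
  have hconj : ContinuousOn (fun z ↦ conj (p z)) (sphere c R) :=
    continuous_conj.comp_continuousOn hcont
  have havg : circleAverage (fun z ↦ (z - c)⁻¹ ^ n * (p z + conj (p z))) c R =
      iteratedDeriv n p c / n ! := by
    simp only [mul_add]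
    rw [circleAverage_fun_add ((hinv.fun_mul hcont).circleIntegrable hR.le)
        ((hinv.fun_mul hconj).circleIntegrable hR.le),
      circleAverage_inv_pow_mul_eq_iteratedDeriv hR hp,
      circleAverage_inv_pow_mul_conj_eq_zero hR hp hn, add_zero]
  have hnorm : EqOn (fun z ↦ ‖(z - c)⁻¹ ^ n * (p z + conj (p z))‖)
      (fun z ↦ (2 * (R ^ n)⁻¹) • (p z).re) (sphere c |R|) := by
    intro z hz
    rw [abs_of_pos hR] at hz
    simp only [add_conj, norm_mul, norm_pow, norm_inv, mem_sphere_iff_norm.1 hz, Real.norm_ofNat,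
      norm_real, Real.norm_of_nonneg (hre z hz), smul_eq_mul]
    ring
  have h := norm_circleAverage_le (f := fun z ↦ (z - c)⁻¹ ^ n * (p z + conj (p z))) (c := c)
    (R := R)
  rw [havg, circleAverage_congr_sphere hnorm, circleAverage_fun_smul,
    ← re_eq_circleAverage_re hR hp, norm_div, Complex.norm_natCast, smul_eq_mul] at h
  field_simp at h
  linarith

theorem norm_iteratedDeriv_mul_pow_le_of_re_nonneg (hR : 0 < R)
    (hp : DifferentiableOn ℂ p (ball c R)) (hre : ∀ z ∈ ball c R, 0 ≤ (p z).re) {n : ℕ}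
    (hn : n ≠ 0) : ‖iteratedDeriv n p c‖ * R ^ n ≤ 2 * n ! * (p c).re := by
  have hsmall : ∀ r ∈ Ioo 0 R, ‖iteratedDeriv n p c‖ * r ^ n ≤ 2 * n ! * (p c).re :=
    fun r hr ↦ norm_iteratedDeriv_mul_pow_le_of_re_nonneg_on_sphere hr.1
      (hp.diffContOnCl_ball (closedBall_subset_ball hr.2))
      (fun z hz ↦ hre z (closedBall_subset_ball hr.2 (sphere_subset_closedBall hz))) hn
  have hlim : Tendsto (fun r ↦ ‖iteratedDeriv n p c‖ * r ^ n) (𝓝[<] R)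
      (𝓝 (‖iteratedDeriv n p c‖ * R ^ n)) :=
    (Continuous.tendsto (by fun_prop) R).mono_left nhdsWithin_le_nhds
  exact le_of_tendsto hlim (eventually_of_mem (Ioo_mem_nhdsLT hR) hsmall)

theorem norm_iteratedDeriv_add_two_mul_pow_le_of_le_re_deriv {F : ℂ → ℂ} {β : ℝ} (hR : 0 < R)
    (hF : DifferentiableOn ℂ F (ball c R)) (hre : ∀ z ∈ ball c R, β ≤ (deriv F z).re) (n : ℕ) :
    ‖iteratedDeriv (n + 2) F c‖ * R ^ (n + 1) ≤ 2 * (n + 1)! * ((deriv F c).re - β) := by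
  have hp : DifferentiableOn ℂ (fun z ↦ deriv F z - β) (ball c R) :=
    (hF.deriv isOpen_ball).sub_const _
  have h := norm_iteratedDeriv_mul_pow_le_of_re_nonneg hR hp
    (fun z hz ↦ by simpa using hre z hz) n.succ_ne_zero
  rwa [iteratedDeriv_succ', deriv_sub_const_fun, ← iteratedDeriv_succ', ← iteratedDeriv_succ',
    sub_re, ofReal_re] at h

end Caratheodory

theorem norm_iteratedDeriv_three_le_of_lt_re_deriv {F : ℂ → ℂ} {β : ℝ}
    (hF : DifferentiableOn ℂ F (ball 0 1)) (hF1 : deriv F 0 = 1)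
    (hre : ∀ z ∈ ball (0 : ℂ) 1, β < (deriv F z).re) :
    ‖iteratedDeriv 3 F 0‖ ≤ 4 * (1 - β) := by
  have h := norm_iteratedDeriv_add_two_mul_pow_le_of_le_re_deriv one_pos hF
    (fun z hz ↦ (hre z hz).le) 1
  rw [hF1, one_re, one_pow, mul_one] at h
  norm_num at h
  linarith

theorem a2_a3_bound_re_deriv_small_beta_general
    (f g : ℂ → ℂ)
    (hf : AnalyticOnNhd ℂ f (ball (0 : ℂ) 1))
    (hf0 : f 0 = 0) (hf1 : deriv f 0 = 1)
    (hg : AnalyticOnNhd ℂ g (ball (0 : ℂ) 1))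
    (hgf : ∀ᶠ z in nhds (0 : ℂ), g (f z) = z)
    (beta : ℝ)
    (hfre : ∀ z ∈ ball (0 : ℂ) 1, beta < (deriv f z).re)
    (hgre : ∀ w ∈ ball (0 : ℂ) 1, beta < (deriv g w).re)
    (a₂ a₃ : ℂ) (ha₂ : a₂ = iteratedDeriv 2 f 0 / 2) (ha₃ : a₃ = iteratedDeriv 3 f 0 / 6) :
    ‖a₂‖ ≤ Real.sqrt (2 * (1 - beta) / 3) ∧ ‖a₃‖ ≤ 2 * (1 - beta) / 3 := by
  have h0 : (0 : ℂ) ∈ ball (0 : ℂ) 1 := mem_ball_self one_pos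
  have hf' : ContDiffAt ℂ 3 f 0 := (hf 0 h0).contDiffAt
  have hg' : ContDiffAt ℂ 3 g (f 0) := (hg (f 0) (by rwa [hf0])).contDiffAt
  have hg1 := deriv_eq_one_of_comp_eventuallyEq_id (hg'.differentiableAt three_ne_zero)
    (hf'.differentiableAt three_ne_zero) hgf hf1
  have hg3 := iteratedDeriv_three_of_comp_eventuallyEq_id hg' hf' hgf hf1
  rw [hf0] at hg1 hg3
  have hf3 := norm_iteratedDeriv_three_le_of_lt_re_deriv hf.differentiableOn hf1 hfre
  have hg3' := norm_iteratedDeriv_three_le_of_lt_re_deriv hg.differentiableOn hg1 hgre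
  have ha₂sq : 12 * ‖a₂‖ ^ 2 = ‖iteratedDeriv 3 g 0 + iteratedDeriv 3 f 0‖ := by
    rw [hg3, sub_add_cancel, ha₂, norm_mul, norm_div, norm_pow, Complex.norm_ofNat,
      Complex.norm_ofNat]
    ring
  constructor
  · refine Real.le_sqrt_of_sq_le ?_
    linarith [norm_add_le (iteratedDeriv 3 g 0) (iteratedDeriv 3 f 0)]
  · rw [ha₃, norm_div, Complex.norm_ofNat]
    linarith

/-- If `f` is bi-univalent with inverse extension `g`, `Re f' > β` and `Re g' > β` on
the unit disk with `0 ≤ β < 1/3`, then `|a₂| ≤ √(2(1-β)/3)` and `|a₃| ≤ 2(1-β)/3`. -/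
theorem a2_a3_bound_re_deriv_small_beta
    (f g : ℂ → ℂ)
    (hf : AnalyticOnNhd ℂ f (ball (0 : ℂ) 1)) (hfinj : Set.InjOn f (ball (0 : ℂ) 1))
    (hf0 : f 0 = 0) (hf1 : deriv f 0 = 1)
    (hg : AnalyticOnNhd ℂ g (ball (0 : ℂ) 1)) (hginj : Set.InjOn g (ball (0 : ℂ) 1))
    (hgf : ∀ᶠ z in nhds (0 : ℂ), g (f z) = z)
    (beta : ℝ) (hbeta : 0 ≤ beta ∧ beta < 1/3)
    (hfre : ∀ z ∈ ball (0 : ℂ) 1, beta < (deriv f z).re)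
    (hgre : ∀ w ∈ ball (0 : ℂ) 1, beta < (deriv g w).re)
    (a₂ a₃ : ℂ) (ha₂ : a₂ = iteratedDeriv 2 f 0 / 2) (ha₃ : a₃ = iteratedDeriv 3 f 0 / 6) :
    ‖a₂‖ ≤ Real.sqrt (2 * (1 - beta) / 3) ∧ ‖a₃‖ ≤ 2 * (1 - beta) / 3 :=
  a2_a3_bound_re_deriv_small_beta_general f g hf hf0 hf1 hg hgf beta hfre hgre a₂ a₃ ha₂ ha₃
end

section
/- Let f be bi-univalent on 𝕌 with inverse extension g, let α ∈ (0,1], and suppose |arg f'(z)| < απ/2 and |arg g'(w)| < απ/2 for all z, w ∈ 𝕌 (the class B_Σ(α) of Srivastava–Mishra–Gochhayat). Then |a₂| ≤ α√(2/(α+2)) and |a₃| ≤ α(3α+2)/3. -/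
/-!
The functions `p = (f')^{1/α}` and `q = (g')^{1/α}` have positive real part, so their second
derivatives at `0` are bounded by `4` (Carathéodory). Expanding `(f')^{1/α}` and `(g')^{1/α}` to
second order, with the Taylor coefficients `-a₂` and `2a₂² - a₃` of `g = f⁻¹`, gives
`‖6α a₃ + 4(1 - α) a₂²‖ ≤ 4α²` and `‖α(12a₂² - 6a₃) + 4(1 - α) a₂²‖ ≤ 4α²`. Adding them bounds
`(4α + 8)‖a₂‖²` by `8α²`; subtracting them bounds `12α‖a₃ - a₂²‖` by `8α²`.
-/

open Metric Complex

open Filter Set Topology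

theorem iteratedDeriv_two_eq_two_mul_deriv_dslope {ω : ℂ → ℂ} (hω : AnalyticAt ℂ ω 0)
    (h0 : ω 0 = 0) : iteratedDeriv 2 ω 0 = 2 * deriv (dslope ω 0) 0 := by
  obtain ⟨p, hp⟩ := hω
  have hψ : AnalyticAt ℂ (dslope ω 0) 0 := ⟨_, hp.has_fpower_series_dslope_fslope⟩
  have hω_eq : ω = fun z => z * dslope ω 0 z := by
    funext z
    simpa [h0] using (sub_smul_dslope ω 0 z).symm
  conv_lhs => rw [hω_eq]
  rw [iteratedDeriv_fun_mul contDiffAt_fun_id hψ.contDiffAt]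
  simp [iteratedDeriv_fun_id_zero]

theorem norm_iteratedDeriv_two_le_two {ω : ℂ → ℂ} (hω : DifferentiableOn ℂ ω (ball 0 1))
    (h0 : ω 0 = 0) (h1 : deriv ω 0 = 0) (hm : MapsTo ω (ball 0 1) (closedBall 0 1)) :
    ‖iteratedDeriv 2 ω 0‖ ≤ 2 := by
  have hball : ball (0 : ℂ) 1 ∈ 𝓝 0 := ball_mem_nhds 0 one_pos
  have hψ : DifferentiableOn ℂ (dslope ω 0) (ball 0 1) := (differentiableOn_dslope hball).2 hω
  have hψm : MapsTo (dslope ω 0) (ball 0 1) (closedBall (dslope ω 0 0) 1) := by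
    rw [dslope_same, h1]
    intro z hz
    simpa using norm_dslope_le_div_of_mapsTo_ball hω (by rwa [h0]) hz
  have hψ' : ‖deriv (dslope ω 0) 0‖ ≤ 1 := by
    simpa using norm_deriv_le_div_of_mapsTo_ball hψ hψm one_pos
  rw [iteratedDeriv_two_eq_two_mul_deriv_dslope (hω.analyticAt hball) h0, norm_mul,
    Complex.norm_ofNat]
  linarith

theorem add_one_ne_zero_of_re_pos {w : ℂ} (hw : 0 < w.re) : w + 1 ≠ 0 := by
  intro h
  have := congrArg re h
  simp only [add_re, one_re, zero_re] at this
  linarith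

theorem norm_sub_one_div_add_one_lt_one {w : ℂ} (hw : 0 < w.re) :
    ‖(w - 1) / (w + 1)‖ < 1 := by
  rw [norm_div, div_lt_one (norm_pos_iff.2 (add_one_ne_zero_of_re_pos hw)),
    ← sq_lt_sq₀ (norm_nonneg _) (norm_nonneg _), Complex.sq_norm, Complex.sq_norm, normSq_apply,
    normSq_apply]
  simp only [sub_re, sub_im, add_re, add_im, one_re, one_im]
  nlinarith

theorem iteratedDeriv_even_part {P : ℂ → ℂ} {n : ℕ} (hP : ContDiffAt ℂ n P 0) :
    iteratedDeriv n (fun z => (P z + P (-z)) / 2) 0 =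
      (1 + (-1) ^ n) / 2 * iteratedDeriv n P 0 := by
  have hPneg : ContDiffAt ℂ n (fun z => P (-z)) 0 := by
    have hP' : ContDiffAt ℂ n P (-0) := by rwa [neg_zero]
    exact hP'.comp 0 contDiffAt_fun_id.neg
  rw [iteratedDeriv_div_const, iteratedDeriv_fun_add hP hPneg, iteratedDeriv_comp_neg]
  simp only [neg_zero, smul_eq_mul]
  ring

theorem deriv_sub_one_div_add_one_at_one : deriv (fun w : ℂ => (w - 1) / (w + 1)) 1 = 1 / 2 := by
  have h : HasDerivAt (fun w : ℂ => (w - 1) / (w + 1))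
      ((1 * (1 + 1) - (1 - 1) * 1) / (1 + 1) ^ 2) 1 :=
    ((hasDerivAt_id' 1).sub_const 1).div ((hasDerivAt_id' 1).add_const 1) (by norm_num)
  rw [h.deriv]
  norm_num

theorem norm_iteratedDeriv_two_le_four_of_re_pos_of_deriv_eq_zero {q : ℂ → ℂ}
    (hq : AnalyticOnNhd ℂ q (ball 0 1)) (h0 : q 0 = 1) (h1 : deriv q 0 = 0)
    (hre : ∀ z ∈ ball (0 : ℂ) 1, 0 < (q z).re) :
    ‖iteratedDeriv 2 q 0‖ ≤ 4 := by
  set cayley : ℂ → ℂ := fun w => (w - 1) / (w + 1) with hcayley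
  have hcayley_an : AnalyticAt ℂ cayley (q 0) := by
    rw [h0]
    exact AnalyticAt.div (by fun_prop) (by fun_prop) (by norm_num)
  have hq_an : AnalyticAt ℂ q 0 := hq 0 (mem_ball_self one_pos)
  have hω : DifferentiableOn ℂ (cayley ∘ q) (ball 0 1) := fun z hz =>
    (((hq z hz).differentiableAt.sub_const 1).div ((hq z hz).differentiableAt.add_const 1)
      (add_one_ne_zero_of_re_pos (hre z hz))).differentiableWithinAt
  have hω0 : (cayley ∘ q) 0 = 0 := by simp [cayley, h0]
  have hω1 : deriv (cayley ∘ q) 0 = 0 := by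
    rw [deriv_comp 0 hcayley_an.differentiableAt hq_an.differentiableAt, h1, mul_zero]
  have hωm : MapsTo (cayley ∘ q) (ball 0 1) (closedBall 0 1) := fun z hz =>
    mem_closedBall_zero_iff.2 (norm_sub_one_div_add_one_lt_one (hre z hz)).le
  have hω2 : iteratedDeriv 2 (cayley ∘ q) 0 = iteratedDeriv 2 q 0 / 2 := by
    rw [iteratedDeriv_comp_two hcayley_an.contDiffAt hq_an.contDiffAt, h1, h0, hcayley,
      deriv_sub_one_div_add_one_at_one]
    ring
  have := norm_iteratedDeriv_two_le_two hω hω0 hω1 hωm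
  rw [hω2, norm_div, Complex.norm_ofNat] at this
  linarith

/-- Carathéodory's bound `|p₂| ≤ 2` for the second Taylor coefficient. -/
theorem norm_iteratedDeriv_two_le_four_of_re_pos {P : ℂ → ℂ}
    (hP : AnalyticOnNhd ℂ P (ball 0 1)) (h0 : P 0 = 1)
    (hre : ∀ z ∈ ball (0 : ℂ) 1, 0 < (P z).re) :
    ‖iteratedDeriv 2 P 0‖ ≤ 4 := by
  -- the even part of `P` still has positive real part and the same `P''(0)`, but no linear term
  have hP0 : ContDiffAt ℂ 2 P 0 := (hP 0 (mem_ball_self one_pos)).contDiffAt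
  have hneg : MapsTo (fun z : ℂ => -z) (ball 0 1) (ball 0 1) := fun z hz => by simpa using hz
  have hq : AnalyticOnNhd ℂ (fun z => (P z + P (-z)) / 2) (ball 0 1) :=
    (hP.add (hP.comp analyticOnNhd_id.neg hneg)).div_const
  have hq_re : ∀ z ∈ ball (0 : ℂ) 1, 0 < ((P z + P (-z)) / 2).re := fun z hz => by
    rw [div_ofNat_re, add_re]
    linarith [hre z hz, hre (-z) (hneg hz)]
  have hq1 : deriv (fun z => (P z + P (-z)) / 2) 0 = 0 := by
    rw [← iteratedDeriv_one, iteratedDeriv_even_part (hP0.of_le (by norm_num))]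
    norm_num
  have hq2 : iteratedDeriv 2 (fun z => (P z + P (-z)) / 2) 0 = iteratedDeriv 2 P 0 := by
    rw [iteratedDeriv_even_part hP0]
    norm_num
  rw [← hq2]
  exact norm_iteratedDeriv_two_le_four_of_re_pos_of_deriv_eq_zero hq (by simp [h0]) hq1 hq_re

theorem AnalyticOnNhd.mapsTo_slitPlane {F : ℂ → ℂ} {U : Set ℂ} (hF : AnalyticOnNhd ℂ F U)
    (hUo : IsOpen U) (hU : IsPreconnected U) {z₀ : ℂ} (hz₀ : z₀ ∈ U) (hFz₀ : F z₀ ≠ 0)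
    (harg : ∀ z ∈ U, arg (F z) ≠ Real.pi) : MapsTo F U slitPlane := by
  intro z hz
  refine mem_slitPlane_iff_arg.2 ⟨harg z hz, fun hFz => ?_⟩
  rcases hF.is_constant_or_isOpen hU with ⟨w, hw⟩ | hopen
  · exact hFz₀ (by rw [hw z₀ hz₀, ← hw z hz, hFz])
  · -- the open set `F '' U` contains `0`, hence small negative reals, whose argument is `π`
    have hnhds : F '' U ∈ 𝓝 (0 : ℂ) := (hopen U subset_rfl hUo).mem_nhds ⟨z, hz, hFz⟩
    have hlim : Tendsto (fun t : ℝ => (t : ℂ)) (𝓝[<] 0) (𝓝 0) := by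
      simpa using (continuous_ofReal.tendsto 0).mono_left nhdsWithin_le_nhds
    have hneg := hlim.eventually_mem hnhds
    obtain ⟨t, ⟨z', hz', hFz'⟩, ht⟩ := (hneg.and self_mem_nhdsWithin).exists
    exact harg z' hz' (by rw [hFz', arg_ofReal_of_neg ht])

theorem re_cpow_ofReal_pos {w : ℂ} (hw : w ≠ 0) {t : ℝ} (h : |arg w * t| < Real.pi / 2) :
    0 < (w ^ (t : ℂ)).re := by
  rw [cpow_ofReal_re]
  exact mul_pos (Real.rpow_pos_of_pos (norm_pos_iff.2 hw) t)
    (Real.cos_pos_of_mem_Ioo (abs_lt.1 h))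

theorem iteratedDeriv_two_cpow_const_one (c : ℂ) :
    iteratedDeriv 2 (fun w : ℂ => w ^ c) 1 = c * (c - 1) := by
  have hderiv : deriv (fun w : ℂ => w ^ c) =ᶠ[𝓝 1] fun w => c * w ^ (c - 1) :=
    (isOpen_slitPlane.eventually_mem one_mem_slitPlane).mono fun w hw =>
      Complex.deriv_cpow_const hw
  rw [iteratedDeriv_succ, iteratedDeriv_one, hderiv.deriv_eq,
    ((hasStrictDerivAt_cpow_const one_mem_slitPlane).hasDerivAt.const_mul c).deriv]
  simp

theorem norm_mul_iteratedDeriv_two_add_sq_le_of_abs_arg_lt {F : ℂ → ℂ} {α : ℝ} (hα : 0 < α)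
    (hα2 : α ≤ 2) (hF : AnalyticOnNhd ℂ F (ball 0 1)) (hF0 : F 0 = 1)
    (harg : ∀ z ∈ ball (0 : ℂ) 1, |arg (F z)| < α * Real.pi / 2) :
    ‖(α : ℂ) * iteratedDeriv 2 F 0 + (1 - α) * deriv F 0 ^ 2‖ ≤ 4 * α ^ 2 := by
  have hball0 : (0 : ℂ) ∈ ball (0 : ℂ) 1 := mem_ball_self one_pos
  have hslit : MapsTo F (ball 0 1) slitPlane := by
    refine hF.mapsTo_slitPlane isOpen_ball (convex_ball 0 1).isPreconnected hball0
      (by simp [hF0]) fun z hz hπ => ?_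
    have := harg z hz
    rw [hπ, abs_of_pos Real.pi_pos] at this
    nlinarith [Real.pi_pos]
  set c : ℂ := ((α⁻¹ : ℝ) : ℂ) with hc
  set P : ℂ → ℂ := fun z => F z ^ c with hP_def
  have hP : AnalyticOnNhd ℂ P (ball 0 1) := fun z hz =>
    (hF z hz).cpow analyticAt_const (hslit hz)
  have hP0 : P 0 = 1 := by simp [P, hF0]
  have hP_re : ∀ z ∈ ball (0 : ℂ) 1, 0 < (P z).re := fun z hz => by
    refine re_cpow_ofReal_pos (slitPlane_ne_zero (hslit hz)) ?_
    rw [abs_mul, abs_inv, abs_of_pos hα, ← div_eq_mul_inv, div_lt_iff₀ hα]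
    linarith [harg z hz]
  have hpow : AnalyticAt ℂ (fun w : ℂ => w ^ c) (F 0) := by
    rw [hF0]
    exact analyticAt_id.cpow analyticAt_const one_mem_slitPlane
  have hP2 : iteratedDeriv 2 P 0 = c * (c - 1) * deriv F 0 ^ 2 + c * iteratedDeriv 2 F 0 := by
    rw [hP_def, ← Function.comp_def (fun w : ℂ => w ^ c) F,
      iteratedDeriv_comp_two hpow.contDiffAt (hF 0 hball0).contDiffAt, hF0,
      iteratedDeriv_two_cpow_const_one, Complex.deriv_cpow_const one_mem_slitPlane, one_cpow,
      mul_one]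
  have hscale : (α : ℂ) * iteratedDeriv 2 F 0 + (1 - α) * deriv F 0 ^ 2 =
      (α : ℂ) ^ 2 * iteratedDeriv 2 P 0 := by
    have hα' : (α : ℂ) ≠ 0 := ofReal_ne_zero.2 hα.ne'
    rw [hP2, hc, ofReal_inv]
    field_simp
    ring
  rw [hscale, norm_mul, norm_pow, norm_real, Real.norm_of_nonneg hα.le]
  nlinarith [norm_iteratedDeriv_two_le_four_of_re_pos hP hP0 hP_re]

theorem derivs_of_eventually_comp_eq_self {f g : ℂ → ℂ} {x : ℂ} (hf : AnalyticAt ℂ f x)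
    (hg : AnalyticAt ℂ g (f x)) (hf1 : deriv f x = 1) (hgf : ∀ᶠ z in 𝓝 x, g (f z) = z) :
    deriv g (f x) = 1 ∧ iteratedDeriv 2 g (f x) = -iteratedDeriv 2 f x ∧
      iteratedDeriv 3 g (f x) = 3 * iteratedDeriv 2 f x ^ 2 - iteratedDeriv 3 f x := by
  have hid : g ∘ f =ᶠ[𝓝 x] id := hgf
  have h1 : deriv (g ∘ f) x = 1 := by rw [hid.deriv_eq, deriv_id]
  have h2 : iteratedDeriv 2 (g ∘ f) x = 0 := by simp [hid.iteratedDeriv_eq, iteratedDeriv_id]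
  have h3 : iteratedDeriv 3 (g ∘ f) x = 0 := by simp [hid.iteratedDeriv_eq, iteratedDeriv_id]
  rw [deriv_comp x hg.differentiableAt hf.differentiableAt, hf1, mul_one] at h1
  rw [iteratedDeriv_comp_two hg.contDiffAt hf.contDiffAt, h1, hf1] at h2
  rw [iteratedDeriv_comp_three hg.contDiffAt hf.contDiffAt, h1, hf1] at h3
  refine ⟨h1, by linear_combination h2, by linear_combination h3 - 3 * iteratedDeriv 2 f x * h2⟩

theorem norm_coeffs_le_of_norm_le {α : ℝ} (hα : 0 < α) {a₂ a₃ : ℂ}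
    (hf : ‖(α : ℂ) * (6 * a₃) + (1 - α) * (2 * a₂) ^ 2‖ ≤ 4 * α ^ 2)
    (hg : ‖(α : ℂ) * (3 * (2 * a₂) ^ 2 - 6 * a₃) + (1 - α) * (-(2 * a₂)) ^ 2‖ ≤ 4 * α ^ 2) :
    ‖a₂‖ ≤ α * Real.sqrt (2 / (α + 2)) ∧ ‖a₃‖ ≤ α * (3 * α + 2) / 3 := by
  set A : ℂ := (α : ℂ) * (6 * a₃) + (1 - α) * (2 * a₂) ^ 2
  set B : ℂ := (α : ℂ) * (3 * (2 * a₂) ^ 2 - 6 * a₃) + (1 - α) * (-(2 * a₂)) ^ 2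
  have hsum : (4 * α + 8) * ‖a₂‖ ^ 2 ≤ 8 * α ^ 2 := by
    have h : A + B = ((4 * α + 8 : ℝ) : ℂ) * a₂ ^ 2 := by push_cast; ring
    have := norm_add_le_of_le hf hg
    rw [h, norm_mul, norm_real, Real.norm_of_nonneg (by positivity), norm_pow] at this
    linarith
  have hdiff : 12 * α * ‖a₃ - a₂ ^ 2‖ ≤ 8 * α ^ 2 := by
    have h : A - B = ((12 * α : ℝ) : ℂ) * (a₃ - a₂ ^ 2) := by push_cast; ring
    have := norm_sub_le_of_le hf hg
    rw [h, norm_mul, norm_real, Real.norm_of_nonneg (by positivity)] at this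
    linarith
  have ha₂ : ‖a₂‖ ^ 2 ≤ α ^ 2 * (2 / (α + 2)) := by
    rw [mul_div_assoc', le_div_iff₀ (by positivity)]
    nlinarith
  have hdiff' : ‖a₃ - a₂ ^ 2‖ ≤ 2 * α / 3 := by nlinarith [norm_nonneg (a₃ - a₂ ^ 2)]
  constructor
  · calc ‖a₂‖ = Real.sqrt (‖a₂‖ ^ 2) := (Real.sqrt_sq (norm_nonneg _)).symm
      _ ≤ Real.sqrt (α ^ 2 * (2 / (α + 2))) := Real.sqrt_le_sqrt ha₂
      _ = α * Real.sqrt (2 / (α + 2)) := by rw [Real.sqrt_mul (sq_nonneg α), Real.sqrt_sq hα.le]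
  · have h2α : α ^ 2 * (2 / (α + 2)) ≤ α ^ 2 := by
      rw [mul_div_assoc', div_le_iff₀ (by positivity)]
      nlinarith
    calc ‖a₃‖ ≤ ‖a₂ ^ 2‖ + ‖a₃ - a₂ ^ 2‖ := norm_le_insert' _ _
      _ ≤ α ^ 2 + 2 * α / 3 := by rw [norm_pow]; linarith
      _ = α * (3 * α + 2) / 3 := by ring

theorem srivastava_class_bounds_general
    (f g : ℂ → ℂ)
    (hf : AnalyticOnNhd ℂ f (ball (0 : ℂ) 1))
    (hf0 : f 0 = 0) (hf1 : deriv f 0 = 1)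
    (hg : AnalyticOnNhd ℂ g (ball (0 : ℂ) 1))
    (hgf : ∀ᶠ z in nhds (0 : ℂ), g (f z) = z)
    (alpha : ℝ) (halpha : 0 < alpha ∧ alpha ≤ 1)
    (hfarg : ∀ z ∈ ball (0 : ℂ) 1, |Complex.arg (deriv f z)| < alpha * Real.pi / 2)
    (hgarg : ∀ w ∈ ball (0 : ℂ) 1, |Complex.arg (deriv g w)| < alpha * Real.pi / 2)
    (a₂ a₃ : ℂ) (ha₂ : a₂ = iteratedDeriv 2 f 0 / 2) (ha₃ : a₃ = iteratedDeriv 3 f 0 / 6) :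
    ‖a₂‖ ≤ alpha * Real.sqrt (2 / (alpha + 2)) ∧ ‖a₃‖ ≤ alpha * (3 * alpha + 2) / 3 := by
  obtain ⟨hα, hα1⟩ := halpha
  have hball0 : (0 : ℂ) ∈ ball (0 : ℂ) 1 := mem_ball_self one_pos
  obtain ⟨hg1, hg2, hg3⟩ :=
    derivs_of_eventually_comp_eq_self (hf 0 hball0) (by rw [hf0]; exact hg 0 hball0) hf1 hgf
  rw [hf0] at hg1 hg2 hg3
  have hf2 : iteratedDeriv 2 f 0 = 2 * a₂ := by rw [ha₂]; ring
  have hf3 : iteratedDeriv 3 f 0 = 6 * a₃ := by rw [ha₃]; ring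
  have hderiv : ∀ h : ℂ → ℂ, deriv (deriv h) 0 = iteratedDeriv 2 h 0 ∧
      iteratedDeriv 2 (deriv h) 0 = iteratedDeriv 3 h 0 := fun h =>
    ⟨by rw [iteratedDeriv_succ', iteratedDeriv_one], by rw [iteratedDeriv_succ' (n := 2)]⟩
  have hF :=
    norm_mul_iteratedDeriv_two_add_sq_le_of_abs_arg_lt hα (by linarith) hf.deriv hf1 hfarg
  have hG :=
    norm_mul_iteratedDeriv_two_add_sq_le_of_abs_arg_lt hα (by linarith) hg.deriv hg1 hgarg
  rw [(hderiv f).1, (hderiv f).2, hf2, hf3] at hF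
  rw [(hderiv g).1, (hderiv g).2, hg2, hg3, hf2, hf3] at hG
  exact norm_coeffs_le_of_norm_le hα hF hG

/-- Srivastava–Mishra–Gochhayat: if `f` is bi-univalent with inverse extension `g`
and `|arg f'| < απ/2`, `|arg g'| < απ/2` on the unit disk, then
`|a₂| ≤ α √(2/(α+2))` and `|a₃| ≤ α(3α+2)/3`. -/
theorem srivastava_class_bounds
    (f g : ℂ → ℂ)
    (hf : AnalyticOnNhd ℂ f (ball (0 : ℂ) 1)) (hfinj : Set.InjOn f (ball (0 : ℂ) 1))
    (hf0 : f 0 = 0) (hf1 : deriv f 0 = 1)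
    (hg : AnalyticOnNhd ℂ g (ball (0 : ℂ) 1)) (hginj : Set.InjOn g (ball (0 : ℂ) 1))
    (hgf : ∀ᶠ z in nhds (0 : ℂ), g (f z) = z)
    (alpha : ℝ) (halpha : 0 < alpha ∧ alpha ≤ 1)
    (hfarg : ∀ z ∈ ball (0 : ℂ) 1, |Complex.arg (deriv f z)| < alpha * Real.pi / 2)
    (hgarg : ∀ w ∈ ball (0 : ℂ) 1, |Complex.arg (deriv g w)| < alpha * Real.pi / 2)
    (a₂ a₃ : ℂ) (ha₂ : a₂ = iteratedDeriv 2 f 0 / 2) (ha₃ : a₃ = iteratedDeriv 3 f 0 / 6) :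
    ‖a₂‖ ≤ alpha * Real.sqrt (2 / (alpha + 2)) ∧ ‖a₃‖ ≤ alpha * (3 * alpha + 2) / 3 :=
  srivastava_class_bounds_general f g hf hf0 hf1 hg hgf alpha halpha hfarg hgarg a₂ a₃ ha₂ ha₃
end
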